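/- arXiv:2311.12746 — 5 statements merged into one kernel-verified Lean document; each statement's English description precedes it below -/
import Mathlib

section
/- A morphism φ : [k] → [n] in the simplex category Δ belongs to 𝓘 (i.e. is a composite of idle morphisms) if and only if it can be factored as a surjective monotone map followed by an interval inclusion. In particular, if i : [k] → [l] is an interval inclusion and p : [l] → [n] is a surjective monotone map, then the composite p ∘ i factors as a surjective monotone map followed by an interval inclusion. -/
open CategoryTheory

/-- A morphism of the simplex category is an *interval inclusion* if it is injective and
its image is a set of consecutive elements. -/
def IsIntervalInclusion {X Y : SimplexCategory} (f : X ⟶ Y) : Prop :=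
  Function.Injective f.toOrderHom ∧
    ∀ (x₁ x₂ : Fin (X.len + 1)) (z : Fin (Y.len + 1)),
      f.toOrderHom x₁ ≤ z → z ≤ f.toOrderHom x₂ → ∃ w, f.toOrderHom w = z

/-- A morphism of the simplex category is *idle* if it is surjective or an interval
inclusion. -/
def IsIdle {X Y : SimplexCategory} (f : X ⟶ Y) : Prop :=
  Function.Surjective f.toOrderHom ∨ IsIntervalInclusion f

/-- The class `𝓘` of composites of idle morphisms. -/
inductive InI : ∀ {X Y : SimplexCategory}, (X ⟶ Y) → Prop
  | of {X Y : SimplexCategory} (f : X ⟶ Y) : IsIdle f → InI f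
  | comp {X Y Z : SimplexCategory} (f : X ⟶ Y) (g : Y ⟶ Z) :
      InI f → InI g → InI (f ≫ g)

/-- A morphism factors as a surjective monotone map followed by an interval inclusion. -/
def FactorsSurjInterval {X Y : SimplexCategory} (f : X ⟶ Y) : Prop :=
  ∃ (Z : SimplexCategory) (p : X ⟶ Z) (i : Z ⟶ Y),
    Function.Surjective p.toOrderHom ∧ IsIntervalInclusion i ∧ f = p ≫ i

/-! Being in `𝓘` means having an order-connected range: this property is shared by surjections
and interval inclusions and is stable under composition, and conversely the image
factorization of a map with order-connected range is a surjection followed by an interval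
inclusion. -/

open Set

theorem Monotone.ordConnected_image {α β : Type*} [LinearOrder α] [PartialOrder β]
    {f : α → β} (hf : Monotone f) (hrange : (range f).OrdConnected) {s : Set α}
    (hs : s.OrdConnected) : (f '' s).OrdConnected := by
  refine ⟨?_⟩
  rintro _ ⟨a, ha, rfl⟩ _ ⟨b, hb, rfl⟩ z ⟨haz, hzb⟩
  obtain ⟨y, rfl⟩ := hrange.out (mem_range_self a) (mem_range_self b) ⟨haz, hzb⟩
  rcases le_total y a with hya | hay
  · exact ⟨a, ha, le_antisymm haz (hf hya)⟩
  rcases le_total b y with hby | hyb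
  · exact ⟨b, hb, le_antisymm (hf hby) hzb⟩
  · exact ⟨y, hs.out ha hb ⟨hay, hyb⟩, rfl⟩

namespace SimplexCategory

variable {X Y Z : SimplexCategory}

theorem ordConnected_range_iff (f : X ⟶ Y) :
    (range f.toOrderHom).OrdConnected ↔
      ∀ (x₁ x₂ : Fin (X.len + 1)) (z : Fin (Y.len + 1)),
        f.toOrderHom x₁ ≤ z → z ≤ f.toOrderHom x₂ → ∃ w, f.toOrderHom w = z := by
  refine ⟨fun h x₁ x₂ z h₁ h₂ => h.out (mem_range_self x₁) (mem_range_self x₂) ⟨h₁, h₂⟩,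
    fun h => ⟨?_⟩⟩
  rintro _ ⟨x₁, rfl⟩ _ ⟨x₂, rfl⟩ z ⟨h₁, h₂⟩
  exact h x₁ x₂ z h₁ h₂

theorem ordConnected_range_comp {f : X ⟶ Y} {g : Y ⟶ Z}
    (hf : (range f.toOrderHom).OrdConnected) (hg : (range g.toOrderHom).OrdConnected) :
    (range (f ≫ g).toOrderHom).OrdConnected := by
  rw [comp_toOrderHom, OrderHom.comp_coe, range_comp]
  exact g.toOrderHom.monotone.ordConnected_image hg hf

theorem ordConnected_range_of_inI {f : X ⟶ Y} (h : InI f) :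
    (range f.toOrderHom).OrdConnected := by
  induction h with
  | of f hf =>
    rcases hf with hsurj | hinterval
    · rw [hsurj.range_eq]
      exact ordConnected_univ
    · exact (ordConnected_range_iff f).mpr hinterval.2
  | comp f g _ _ ihf ihg => exact ordConnected_range_comp ihf ihg

open Limits in
theorem factorsSurjInterval_of_ordConnected_range {f : X ⟶ Y}
    (hf : (range f.toOrderHom).OrdConnected) : FactorsSurjInterval f := by
  have hp : Function.Surjective (factorThruImage f).toOrderHom :=
    epi_iff_surjective.mp inferInstance
  have hrange : range (image.ι f).toOrderHom = range f.toOrderHom := by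
    conv_rhs => rw [← image.fac f]
    rw [comp_toOrderHom, OrderHom.comp_coe, range_comp, hp.range_eq, image_univ]
  refine ⟨image f, factorThruImage f, image.ι f, hp, ⟨?_, ?_⟩, (image.fac f).symm⟩
  · exact mono_iff_injective.mp inferInstance
  · rw [← ordConnected_range_iff, hrange]
    exact hf

theorem inI_of_factorsSurjInterval {f : X ⟶ Y} (h : FactorsSurjInterval f) : InI f := by
  obtain ⟨_, p, i, hp, hi, rfl⟩ := h
  exact InI.comp p i (InI.of p (Or.inl hp)) (InI.of i (Or.inr hi))

end SimplexCategory

open SimplexCategory in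
/-- A morphism `φ : [k] ⟶ [n]` of the simplex category belongs to `𝓘` (the composites of
idle morphisms) if and only if it factors as a surjective monotone map followed by an
interval inclusion.  In particular, if `i` is an interval inclusion and `p` is a surjective
monotone map, then the composite `p ∘ i` factors as a surjective monotone map followed by an
interval inclusion. -/
theorem idleComposites_iff_factorsSurjInterval :
    (∀ {X Y : SimplexCategory} (φ : X ⟶ Y), InI φ ↔ FactorsSurjInterval φ) ∧
    (∀ {X Y Z : SimplexCategory} (i : X ⟶ Y) (p : Y ⟶ Z),
      IsIntervalInclusion i → Function.Surjective p.toOrderHom →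
      FactorsSurjInterval (i ≫ p)) := by
  refine ⟨fun φ => ⟨fun h => ?_, inI_of_factorsSurjInterval⟩, fun i p hi hp => ?_⟩
  · exact factorsSurjInterval_of_ordConnected_range (ordConnected_range_of_inI h)
  · exact factorsSurjInterval_of_ordConnected_range <| ordConnected_range_comp
      ((ordConnected_range_iff i).mpr hi.2) (hp.range_eq ▸ ordConnected_univ)
end

section
/- Let f : [n] → [m] be a monotone map. For all a ≤ b in [n] one has f([a,b]) ⊆ [f(a), f(b)], where [x,y] denotes {z : x ≤ z ≤ y}. Moreover, f([a,b]) = [f(a), f(b)] holds for every pair a ≤ b if and only if f factors as a surjective monotone map followed by an interval inclusion (equivalently, if and only if f belongs to 𝓘). -/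
open CategoryTheory

/-- Auxiliary predicate: every value between `f 0` and `f last` is attained. -/
def PAux {X Y : SimplexCategory} (f : X ⟶ Y) : Prop :=
  ∀ z : Fin (Y.len + 1), f.toOrderHom 0 ≤ z → z ≤ f.toOrderHom (Fin.last _) →
    ∃ w, f.toOrderHom w = z

lemma clampAux {n m : ℕ} (F : Fin (n + 1) →o Fin (m + 1)) {a b : Fin (n + 1)} (hab : a ≤ b)
    {z : Fin (m + 1)} (hza : F a ≤ z) (hzb : z ≤ F b) {w : Fin (n + 1)} (hw : F w = z) :
    ∃ w', a ≤ w' ∧ w' ≤ b ∧ F w' = z := by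
  rcases le_total w a with h | h
  · refine ⟨a, le_refl a, hab, le_antisymm hza ?_⟩
    rw [← hw]; exact F.mono h
  · rcases le_total w b with h' | h'
    · exact ⟨w, h, h', hw⟩
    · exact ⟨b, hab, le_refl b, le_antisymm (hw ▸ F.mono h') hzb⟩

lemma pAux_iff {X Y : SimplexCategory} (f : X ⟶ Y) :
    PAux f ↔ (∀ a b : Fin (X.len + 1), a ≤ b →
      f.toOrderHom '' Set.Icc a b = Set.Icc (f.toOrderHom a) (f.toOrderHom b)) := by
  constructor
  · intro hP a b hab
    apply Set.Subset.antisymm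
    · rintro z ⟨x, ⟨hx1, hx2⟩, rfl⟩
      exact ⟨f.toOrderHom.mono hx1, f.toOrderHom.mono hx2⟩
    · rintro z ⟨hz1, hz2⟩
      obtain ⟨w, hw⟩ := hP z (le_trans (f.toOrderHom.mono (Fin.zero_le a)) hz1)
        (le_trans hz2 (f.toOrderHom.mono (Fin.le_last b)))
      obtain ⟨w', hw1, hw2, hw3⟩ := clampAux f.toOrderHom hab hz1 hz2 hw
      exact ⟨w', ⟨hw1, hw2⟩, hw3⟩
  · intro h z hz1 hz2
    have := h 0 (Fin.last _) (Fin.zero_le _)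
    have hz : z ∈ f.toOrderHom '' Set.Icc 0 (Fin.last _) := this ▸ ⟨hz1, hz2⟩
    obtain ⟨w, _, hw⟩ := hz
    exact ⟨w, hw⟩

lemma pAux_comp {X Y Z : SimplexCategory} (f : X ⟶ Y) (g : Y ⟶ Z)
    (hf : PAux f) (hg : PAux g) : PAux (f ≫ g) := by
  intro z hz1 hz2
  have hcomp : ∀ x, (f ≫ g).toOrderHom x = g.toOrderHom (f.toOrderHom x) := fun _ => rfl
  rw [hcomp] at hz1 hz2
  have h0 : g.toOrderHom 0 ≤ z :=
    le_trans (g.toOrderHom.mono (Fin.zero_le _)) hz1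
  have hl : z ≤ g.toOrderHom (Fin.last _) :=
    le_trans hz2 (g.toOrderHom.mono (Fin.le_last _))
  obtain ⟨w, hw⟩ := hg z h0 hl
  obtain ⟨w', hw1, hw2, hw3⟩ := clampAux g.toOrderHom
    (f.toOrderHom.mono (Fin.zero_le (Fin.last _))) hz1 hz2 hw
  obtain ⟨u, hu⟩ := hf w' hw1 hw2
  exact ⟨u, by rw [hcomp, hu, hw3]⟩

lemma pAux_of_idle {X Y : SimplexCategory} (f : X ⟶ Y) (h : IsIdle f) : PAux f := by
  rcases h with h | ⟨_, h⟩
  · intro z _ _; exact h z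
  · intro z hz1 hz2; exact h 0 (Fin.last _) z hz1 hz2

lemma pAux_of_inI {X Y : SimplexCategory} (f : X ⟶ Y) (h : InI f) : PAux f := by
  induction h with
  | of f hf => exact pAux_of_idle f hf
  | comp f g _ _ ihf ihg => exact pAux_comp f g ihf ihg

lemma range_subset_Icc {X Y : SimplexCategory} (f : X ⟶ Y) :
    Set.range f.toOrderHom ⊆
      Set.Icc (f.toOrderHom 0) (f.toOrderHom (Fin.last _)) := by
  rintro _ ⟨x, rfl⟩
  exact ⟨f.toOrderHom.mono (Fin.zero_le _), f.toOrderHom.mono (Fin.le_last _)⟩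

lemma factors_of_pAux {X Y : SimplexCategory} (f : X ⟶ Y) (h : PAux f) :
    FactorsSurjInterval f := by
  refine ⟨Limits.image f, Limits.factorThruImage f, Limits.image.ι f, ?_, ⟨?_, ?_⟩, ?_⟩
  · exact SimplexCategory.epi_iff_surjective.mp inferInstance
  · exact SimplexCategory.mono_iff_injective.mp inferInstance
  · -- interval inclusion property for image.ι
    have hfac : Limits.factorThruImage f ≫ Limits.image.ι f = f := Limits.image.fac f
    have hrange : Set.range (Limits.image.ι f).toOrderHom = Set.range f.toOrderHom := by
      conv_rhs => rw [← hfac]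
      have hsurj : Function.Surjective (Limits.factorThruImage f).toOrderHom :=
        SimplexCategory.epi_iff_surjective.mp inferInstance
      have happ : ∀ u, (Limits.factorThruImage f ≫ Limits.image.ι f).toOrderHom u =
          (Limits.image.ι f).toOrderHom ((Limits.factorThruImage f).toOrderHom u) :=
        fun _ => rfl
      ext z
      constructor
      · rintro ⟨w, rfl⟩
        obtain ⟨u, hu⟩ := hsurj w
        exact ⟨u, by rw [happ, hu]⟩
      · rintro ⟨u, rfl⟩
        exact ⟨(Limits.factorThruImage f).toOrderHom u, (happ u).symm⟩
    intro x₁ x₂ z hz1 hz2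
    have hx1 : (Limits.image.ι f).toOrderHom x₁ ∈ Set.range f.toOrderHom :=
      hrange ▸ ⟨x₁, rfl⟩
    have hx2 : (Limits.image.ι f).toOrderHom x₂ ∈ Set.range f.toOrderHom :=
      hrange ▸ ⟨x₂, rfl⟩
    obtain ⟨h1, _⟩ := range_subset_Icc f hx1
    obtain ⟨_, h2⟩ := range_subset_Icc f hx2
    obtain ⟨w, hw⟩ := h z (le_trans h1 hz1) (le_trans hz2 h2)
    have : z ∈ Set.range (Limits.image.ι f).toOrderHom := hrange ▸ ⟨w, hw⟩
    exact this
  · exact (Limits.image.fac f).symm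

lemma inI_of_factors {X Y : SimplexCategory} (f : X ⟶ Y) (h : FactorsSurjInterval f) :
    InI f := by
  obtain ⟨Z, p, i, hp, hi, hf⟩ := h
  rw [hf]
  exact InI.comp p i (InI.of p (Or.inl hp)) (InI.of i (Or.inr hi))

/-- For a monotone map `f : [n] → [m]`: (1) `f([a,b]) ⊆ [f(a), f(b)]` for all `a ≤ b`;
(2) `f([a,b]) = [f(a), f(b)]` holds for every `a ≤ b` iff `f` factors as a surjective
monotone map followed by an interval inclusion; (3) equivalently, iff `f` belongs to `𝓘`. -/
theorem image_Icc_subset_and_eq_iff {X Y : SimplexCategory} (f : X ⟶ Y) :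
    (∀ a b : Fin (X.len + 1), a ≤ b →
      f.toOrderHom '' Set.Icc a b ⊆ Set.Icc (f.toOrderHom a) (f.toOrderHom b)) ∧
    ((∀ a b : Fin (X.len + 1), a ≤ b →
      f.toOrderHom '' Set.Icc a b = Set.Icc (f.toOrderHom a) (f.toOrderHom b)) ↔
        FactorsSurjInterval f) ∧
    ((∀ a b : Fin (X.len + 1), a ≤ b →
      f.toOrderHom '' Set.Icc a b = Set.Icc (f.toOrderHom a) (f.toOrderHom b)) ↔
        InI f) := by
  refine ⟨?_, ?_, ?_⟩
  · rintro a b hab z ⟨x, ⟨hx1, hx2⟩, rfl⟩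
    exact ⟨f.toOrderHom.mono hx1, f.toOrderHom.mono hx2⟩
  · rw [← pAux_iff]
    exact ⟨factors_of_pAux f, fun h => pAux_of_inI f (inI_of_factors f h)⟩
  · rw [← pAux_iff]
    exact ⟨fun h => inI_of_factors f (factors_of_pAux f h), pAux_of_inI f⟩
end

section
/- Let γ be a path in [n]×[k] and φ a path in [n+k]×[k], and set θ = E_γ ∘ φ : [n+2k] → [n]×[k]. Then there are exactly k indices i ∈ {0, …, n+2k−1} with θ(i) = θ(i+1). Consequently θ admits a factorization θ = γ' ∘ ν, where ν : [n+2k] → [n+k] is a surjective monotone map and γ' is a path in [n]×[k]. -/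
/-!
Along `θ = E_γ ∘ φ` every step is either stationary or a path step: when `φ` moves in its first
coordinate, `E_γ` follows the corresponding step of `γ`, and when `φ` moves in its second
coordinate `j`, the value `max b j` grows by at most one. A path that may pause in this way is
monotone for the product order, so it is determined by its coordinate sum `a + b`, which climbs
from `0` to `n + k` in steps of `0` or `1`. That coordinate sum is `ν`; it rises `n + k` times
among the `n + 2k` steps, which leaves exactly `k` stationary ones.
-/

/-- `γ` is a path in `[n] × [k]` (a simplex of maximal dimension of `Δⁿ × Δᵏ`):
it starts at `(0,0)`, ends at `(n,k)`, and each step increases exactly one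
coordinate by exactly `1`.  The parameter `m` records the length of the path;
necessarily `m = n + k`. -/
def IsPath (n k m : ℕ) (γ : Fin (m + 1) → Fin (n + 1) × Fin (k + 1)) : Prop :=
  γ 0 = (0, 0) ∧
  γ (Fin.last m) = (Fin.last n, Fin.last k) ∧
  ∀ i : Fin m,
    (((γ i.succ).1 : ℕ) = ((γ i.castSucc).1 : ℕ) + 1 ∧ (γ i.succ).2 = (γ i.castSucc).2) ∨
    ((γ i.succ).1 = (γ i.castSucc).1 ∧ ((γ i.succ).2 : ℕ) = ((γ i.castSucc).2 : ℕ) + 1)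

/-- The extension `E_γ : [n+k] × [k] → [n] × [k]` of a path `γ`, given by
`E_γ(i, j) = (a_i, max (b_i) j)` where `γ i = (a_i, b_i)`. -/
def pathExt (n k m : ℕ) (γ : Fin (m + 1) → Fin (n + 1) × Fin (k + 1)) :
    Fin (m + 1) × Fin (k + 1) → Fin (n + 1) × Fin (k + 1) :=
  fun p => ((γ p.1).1, max (γ p.1).2 p.2)

/-- The strict order on paths: `γ₁ < γ₂` if at the least index `s` where they differ the
first coordinate of `γ₁ s` is smaller than that of `γ₂ s`. -/
def pathLT (n k m : ℕ) (γ₁ γ₂ : Fin (m + 1) → Fin (n + 1) × Fin (k + 1)) : Prop :=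
  ∃ s : Fin (m + 1), γ₁ s ≠ γ₂ s ∧ (∀ t : Fin (m + 1), t < s → γ₁ t = γ₂ t) ∧
    (γ₁ s).1 < (γ₂ s).1

open Finset

def IsPathStep {a b : ℕ} (p q : Fin a × Fin b) : Prop :=
  ((q.1 : ℕ) = (p.1 : ℕ) + 1 ∧ q.2 = p.2) ∨ (q.1 = p.1 ∧ (q.2 : ℕ) = (p.2 : ℕ) + 1)

def coordSum {a b : ℕ} (p : Fin a × Fin b) : ℕ := p.1 + p.2

section Grid

variable {a b : ℕ} {p q : Fin a × Fin b}

lemma IsPathStep.le (h : IsPathStep p q) : p ≤ q := by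
  simp only [IsPathStep, Fin.ext_iff] at h
  simp only [Prod.le_def, Fin.le_def]
  omega

lemma IsPathStep.coordSum_eq (h : IsPathStep p q) : coordSum q = coordSum p + 1 := by
  simp only [IsPathStep, Fin.ext_iff] at h
  simp only [coordSum]
  omega

lemma coordSum_mono : Monotone (coordSum : Fin a × Fin b → ℕ) := fun p q h => by
  simp only [Prod.le_def, Fin.le_def] at h
  simp only [coordSum]
  omega

lemma eq_of_le_of_coordSum_eq (hpq : p ≤ q) (h : coordSum p = coordSum q) : p = q := by
  simp only [Prod.le_def, Fin.le_def] at hpq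
  simp only [coordSum] at h
  ext <;> omega

lemma coordSum_le {n k : ℕ} (p : Fin (n + 1) × Fin (k + 1)) : coordSum p ≤ n + k := by
  simp only [coordSum]
  omega

end Grid

lemma Fin.card_filter_add_last {M : ℕ} (g : Fin (M + 1) → ℕ) (P : Fin M → Prop) [DecidablePred P]
    (h : ∀ i, g i.succ = g i.castSucc + if P i then 0 else 1) :
    #{i | P i} + g (Fin.last M) = M + g 0 := by
  induction M with
  | zero => simp
  | succ M ih =>
    have htail := ih (Fin.tail g) (fun i => P i.succ) fun i => by
      simp only [Fin.tail, Fin.succ_castSucc]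
      exact h i.succ
    have h0 := h 0
    simp only [Fin.tail, Fin.succ_last, Nat.succ_eq_add_one] at htail
    rw [Fin.castSucc_zero] at h0
    rw [Fin.card_filter_univ_succ']
    split_ifs at h0 ⊢ <;> omega

lemma Fin.exists_castSucc_eq_succ_eq_of_lt {M : ℕ} {g : Fin (M + 1) → ℕ}
    (h : ∀ i : Fin M, g i.succ ≤ g i.castSucc + 1) {c : ℕ} (hc0 : g 0 ≤ c) (j : Fin (M + 1))
    (hj : c < g j) : ∃ t : Fin M, g t.castSucc = c ∧ g t.succ = c + 1 := by
  induction j using Fin.induction with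
  | zero => omega
  | succ j ih =>
    by_cases hcj : c < g j.castSucc
    · exact ih hcj
    · exact ⟨j, by have := h j; omega, by have := h j; omega⟩

structure IsLazyPath (n k M : ℕ) (θ : Fin (M + 1) → Fin (n + 1) × Fin (k + 1)) : Prop where
  zero : θ 0 = (0, 0)
  last : θ (Fin.last M) = (Fin.last n, Fin.last k)
  step : ∀ i : Fin M, θ i.castSucc = θ i.succ ∨ IsPathStep (θ i.castSucc) (θ i.succ)

namespace IsLazyPath

variable {n k M : ℕ} {θ : Fin (M + 1) → Fin (n + 1) × Fin (k + 1)}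

lemma monotone (hθ : IsLazyPath n k M θ) : Monotone θ :=
  Fin.monotone_iff_le_succ.2 fun i => (hθ.step i).elim le_of_eq IsPathStep.le

lemma eq_iff_coordSum_eq (hθ : IsLazyPath n k M θ) {i j : Fin (M + 1)} :
    θ i = θ j ↔ coordSum (θ i) = coordSum (θ j) := by
  refine ⟨congrArg coordSum, fun h => ?_⟩
  rcases le_total i j with hij | hji
  · exact eq_of_le_of_coordSum_eq (hθ.monotone hij) h
  · exact (eq_of_le_of_coordSum_eq (hθ.monotone hji) h.symm).symm

lemma coordSum_succ (hθ : IsLazyPath n k M θ) (i : Fin M) :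
    coordSum (θ i.succ) = coordSum (θ i.castSucc) + if θ i.castSucc = θ i.succ then 0 else 1 := by
  rcases hθ.step i with h | h
  · simp [h]
  · rw [if_neg fun he => by simpa [he] using h.coordSum_eq, h.coordSum_eq]

lemma card_filter_eq_add (hθ : IsLazyPath n k M θ) :
    #{i : Fin M | θ i.castSucc = θ i.succ} + (n + k) = M := by
  have := Fin.card_filter_add_last (coordSum ∘ θ) _ hθ.coordSum_succ
  simpa [hθ.zero, hθ.last, coordSum] using this

theorem exists_path_comp_surjective (hθ : IsLazyPath n k M θ) :
    ∃ (ν : Fin (M + 1) → Fin (n + k + 1)) (γ : Fin (n + k + 1) → Fin (n + 1) × Fin (k + 1)),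
      Monotone ν ∧ Function.Surjective ν ∧ IsPath n k (n + k) γ ∧ ∀ i, θ i = γ (ν i) := by
  let ν : Fin (M + 1) → Fin (n + k + 1) :=
    fun i => ⟨coordSum (θ i), Nat.lt_succ_of_le (coordSum_le (θ i))⟩
  have hν0 : ν 0 = 0 := by ext; simp [ν, hθ.zero, coordSum]
  have hνlast : ν (Fin.last M) = Fin.last (n + k) := by ext; simp [ν, hθ.last, coordSum]
  have hνstep : ∀ j : Fin (n + k), ∃ t : Fin M, ν t.castSucc = j.castSucc ∧ ν t.succ = j.succ := by
    intro j
    have hstep (i : Fin M) : coordSum (θ i.succ) ≤ coordSum (θ i.castSucc) + 1 := by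
      rw [hθ.coordSum_succ i]
      split_ifs <;> omega
    obtain ⟨t, ht⟩ := Fin.exists_castSucc_eq_succ_eq_of_lt (g := coordSum ∘ θ) (c := j) hstep
      (by simp [hθ.zero, coordSum]) (Fin.last M) (by simp [hθ.last, coordSum])
    exact ⟨t, Fin.ext ht.1, Fin.ext ht.2⟩
  let γ := Function.extend ν θ fun _ => (0, 0)
  have hγ : ∀ i, γ (ν i) = θ i := Function.FactorsThrough.extend_apply
    (fun i j h => hθ.eq_iff_coordSum_eq.2 (Fin.ext_iff.1 h)) _
  refine ⟨ν, γ, fun i j h => coordSum_mono (hθ.monotone h), ?_, ⟨?_, ?_, fun j => ?_⟩,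
    fun i => (hγ i).symm⟩
  · refine Fin.cases ⟨0, hν0⟩ fun j => ?_
    obtain ⟨t, -, ht⟩ := hνstep j
    exact ⟨t.succ, ht⟩
  · rw [← hν0, hγ, hθ.zero]
  · rw [← hνlast, hγ, hθ.last]
  · obtain ⟨t, ht₀, ht₁⟩ := hνstep j
    rw [← ht₀, ← ht₁, hγ, hγ]
    refine (hθ.step t).resolve_left fun h => (Fin.castSucc_lt_succ (i := j)).ne ?_
    rw [← ht₀, ← ht₁]
    exact Fin.ext (congrArg coordSum h)

end IsLazyPath

namespace IsPath

variable {n k m M : ℕ} {γ : Fin (m + 1) → Fin (n + 1) × Fin (k + 1)}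

lemma isPathStep (hγ : IsPath n k m γ) {i j : Fin (m + 1)} (h : (j : ℕ) = i + 1) :
    IsPathStep (γ i) (γ j) := by
  obtain ⟨t, rfl, rfl⟩ : ∃ t : Fin m, t.castSucc = i ∧ t.succ = j :=
    ⟨⟨i, by omega⟩, rfl, Fin.ext (by simp [h])⟩
  exact hγ.2.2 t

lemma pathExt_eq_or_isPathStep (hγ : IsPath n k m γ) {p q : Fin (m + 1) × Fin (k + 1)}
    (h : IsPathStep p q) :
    pathExt n k m γ p = pathExt n k m γ q ∨ IsPathStep (pathExt n k m γ p) (pathExt n k m γ q) := by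
  rcases h with ⟨h1, h2⟩ | ⟨h1, h2⟩
  · have := hγ.isPathStep h1
    simp only [IsPathStep, pathExt, Prod.ext_iff, Fin.ext_iff, Fin.coe_max, h2] at this ⊢
    omega
  · simp only [IsPathStep, pathExt, Prod.ext_iff, Fin.ext_iff, Fin.coe_max, h1, true_and]
    omega

lemma isLazyPath_pathExt_comp (hγ : IsPath n k m γ) {φ : Fin (M + 1) → Fin (m + 1) × Fin (k + 1)}
    (hφ : IsPath m k M φ) : IsLazyPath n k M (pathExt n k m γ ∘ φ) where
  zero := by simp [pathExt, hφ.1, hγ.1]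
  last := by simp [pathExt, hφ.2.1, hγ.2.1]
  step i := hγ.pathExt_eq_or_isPathStep (hφ.2.2 i)

end IsPath

/-- Let `γ` be a path in `[n] × [k]` and `φ` a path in `[n+k] × [k]`, and set
`θ = E_γ ∘ φ : [n+2k] → [n] × [k]`.  Then there are exactly `k` indices `i` with
`θ i = θ (i+1)`; consequently `θ` factors as a path `γ'` in `[n] × [k]` precomposed with a
surjective monotone map `ν : [n+2k] → [n+k]`. -/
theorem pathExt_comp_path_degenerates (n k : ℕ)
    (γ : Fin (n + k + 1) → Fin (n + 1) × Fin (k + 1)) (hγ : IsPath n k (n + k) γ)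
    (φ : Fin (n + k + k + 1) → Fin (n + k + 1) × Fin (k + 1))
    (hφ : IsPath (n + k) k (n + k + k) φ) :
    (Finset.univ.filter (fun i : Fin (n + k + k) =>
      pathExt n k (n + k) γ (φ i.castSucc) = pathExt n k (n + k) γ (φ i.succ))).card = k ∧
    ∃ (ν : Fin (n + k + k + 1) → Fin (n + k + 1))
      (γ' : Fin (n + k + 1) → Fin (n + 1) × Fin (k + 1)),
      Monotone ν ∧ Function.Surjective ν ∧ IsPath n k (n + k) γ' ∧
      ∀ i : Fin (n + k + k + 1), pathExt n k (n + k) γ (φ i) = γ' (ν i) := by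
  have hθ := hγ.isLazyPath_pathExt_comp hφ
  have hcard := hθ.card_filter_eq_add
  simp only [Function.comp_apply] at hcard
  exact ⟨by omega, hθ.exists_path_comp_surjective⟩
end

section
/- Let γ be a path in [n]×[k] and φ a path in [n+k]×[k]. Then there exist a surjective monotone map s : [n+2k] → [n+k] and a path γ' in [n]×[k] with γ' ≤ γ in the path order such that E_γ ∘ φ = γ' ∘ s and, for all (i,j) ∈ [n+2k]×[k], E_γ(E_φ(i,j)) = E_{γ'}(s(i), j). -/
/-!
Write `r(p) = p.1 + p.2` for the rank of a grid point; a path is exactly a monotone map whose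
rank at `i` is `i`. For a path `γ`, the extension `E_γ` is monotone and increases rank by at
most as much as its argument does, so `ψ = E_γ ∘ φ` is a monotone map into `[n] × [k]` from
`(0,0)` to `(n,k)` whose rank grows by at most one per step. Such a map factors as `γ' ∘ s`
with `s = r ∘ ψ` surjective monotone and `γ'` a path. Finally `γ' ≤ γ`: the point `γ' m` is
`E_γ (c, j)` with `c ≤ r(E_γ (c, j)) = m`, so its first coordinate `a_c` is at most `a_m`; at the
first index where two paths differ, their ranks agree, so the first coordinates decide.
-/

def gridRank {a b : ℕ} (p : Fin a × Fin b) : ℕ := p.1 + p.2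

lemma gridRank_lt {a b : ℕ} (p : Fin (a + 1) × Fin (b + 1)) : gridRank p < a + b + 1 := by
  unfold gridRank; omega

lemma eq_of_le_of_gridRank_eq {a b : ℕ} {p q : Fin a × Fin b} (hpq : p ≤ q)
    (h : gridRank p = gridRank q) : p = q := by
  rw [Prod.le_def, Fin.le_def, Fin.le_def] at hpq
  unfold gridRank at h
  ext <;> omega

section Path

variable {n k m : ℕ} {γ : Fin (m + 1) → Fin (n + 1) × Fin (k + 1)}

lemma IsPath.gridRank_eq (hγ : IsPath n k m γ) (i : Fin (m + 1)) : gridRank (γ i) = i := by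
  induction i using Fin.induction with
  | zero => simp [gridRank, hγ.1]
  | succ i ih =>
    unfold gridRank at ih ⊢
    rw [Fin.val_castSucc] at ih
    rcases hγ.2.2 i with ⟨h1, h2⟩ | ⟨h1, h2⟩ <;> rw [Fin.val_succ, h1, h2] <;> omega

lemma IsPath.monotone (hγ : IsPath n k m γ) : Monotone γ := by
  refine Fin.monotone_iff_le_succ.2 fun i => ?_
  rw [Prod.le_def, Fin.le_def, Fin.le_def]
  rcases hγ.2.2 i with ⟨h1, h2⟩ | ⟨h1, h2⟩ <;> rw [h1, h2] <;> omega

lemma isPath_of_monotone_of_gridRank_eq {γ : Fin (n + k + 1) → Fin (n + 1) × Fin (k + 1)}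
    (hmono : Monotone γ) (hrank : ∀ i, gridRank (γ i) = i) : IsPath n k (n + k) γ := by
  unfold gridRank at hrank
  refine ⟨?_, ?_, fun i => ?_⟩
  · have h0 := hrank 0
    simp only [Fin.val_zero] at h0
    simp only [Prod.ext_iff, Fin.ext_iff, Fin.val_zero]
    omega
  · have hlast := hrank (Fin.last _)
    have := (γ (Fin.last _)).1.isLt
    have := (γ (Fin.last _)).2.isLt
    simp only [Fin.val_last] at hlast
    simp only [Prod.ext_iff, Fin.ext_iff, Fin.val_last]
    omega
  · have hle := hmono (Fin.castSucc_le_succ i)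
    rw [Prod.le_def, Fin.le_def, Fin.le_def] at hle
    have h0 := hrank i.castSucc
    have h1 := hrank i.succ
    rw [Fin.val_castSucc] at h0
    rw [Fin.val_succ] at h1
    rcases Nat.lt_or_eq_of_le hle.1 with h | h
    · exact Or.inl ⟨by omega, Fin.ext (by omega)⟩
    · exact Or.inr ⟨Fin.ext h.symm, by omega⟩

lemma eq_or_pathLT_of_fst_le {γ' : Fin (m + 1) → Fin (n + 1) × Fin (k + 1)}
    (hγ' : IsPath n k m γ') (hγ : IsPath n k m γ) (hle : ∀ i, (γ' i).1 ≤ (γ i).1) :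
    γ' = γ ∨ pathLT n k m γ' γ := by
  by_cases heq : γ' = γ
  · exact Or.inl heq
  obtain ⟨s, hs, hmin⟩ :=
    WellFounded.has_min wellFounded_lt {i | γ' i ≠ γ i} (Function.ne_iff.mp heq)
  refine Or.inr ⟨s, hs, fun t hts => not_not.mp fun ht => hmin t ht hts, ?_⟩
  refine lt_of_le_of_ne (hle s) fun hfst => hs ?_
  have hrank := (hγ'.gridRank_eq s).trans (hγ.gridRank_eq s).symm
  unfold gridRank at hrank
  rw [hfst] at hrank
  exact Prod.ext hfst (Fin.ext (by omega))

lemma pathExt_monotone (hγ : IsPath n k m γ) : Monotone (pathExt n k m γ) := by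
  intro p q hpq
  have hγpq := hγ.monotone hpq.1
  exact ⟨hγpq.1, max_le_max hγpq.2 hpq.2⟩

lemma gridRank_pathExt_add_le (hγ : IsPath n k m γ) {p q : Fin (m + 1) × Fin (k + 1)}
    (hpq : p ≤ q) :
    gridRank (pathExt n k m γ q) + gridRank p ≤ gridRank (pathExt n k m γ p) + gridRank q := by
  have hγpq := hγ.monotone hpq.1
  have hp := hγ.gridRank_eq p.1
  have hq := hγ.gridRank_eq q.1
  rw [Prod.le_def, Fin.le_def, Fin.le_def] at hpq hγpq
  unfold gridRank at hp hq ⊢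
  simp only [pathExt, Fin.coe_max]
  omega

lemma fst_pathExt_le (hγ : IsPath n k m γ) (p : Fin (m + 1) × Fin (k + 1)) {i : Fin (m + 1)}
    (hi : gridRank (pathExt n k m γ p) ≤ i) : (pathExt n k m γ p).1 ≤ (γ i).1 := by
  have hp := hγ.gridRank_eq p.1
  refine (hγ.monotone (Fin.le_def.2 ?_)).1
  unfold gridRank at hp hi
  simp only [pathExt, Fin.coe_max] at hi
  omega

lemma pathExt_pathExt {m' : ℕ} (φ : Fin (m' + 1) → Fin (m + 1) × Fin (k + 1))
    (i : Fin (m' + 1)) (j : Fin (k + 1)) :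
    pathExt n k m γ (pathExt m k m' φ (i, j)) =
      ((pathExt n k m γ (φ i)).1, max (pathExt n k m γ (φ i)).2 j) := by
  simp [pathExt, max_assoc]

end Path

lemma exists_apply_eq_of_le_add_one {N : ℕ} {f : Fin (N + 1) → ℕ}
    (hstep : ∀ i : Fin N, f i.succ ≤ f i.castSucc + 1) {c : ℕ} {t : Fin (N + 1)}
    (h0 : f 0 ≤ c) (ht : c ≤ f t) : ∃ u, f u = c := by
  induction t using Fin.induction with
  | zero => exact ⟨0, le_antisymm h0 ht⟩
  | succ i ih =>
    by_cases hc : c ≤ f i.castSucc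
    · exact ih hc
    · exact ⟨i.succ, by have := hstep i; omega⟩

lemma exists_surjective_comp_path {n k N : ℕ} (ψ : Fin (N + 1) → Fin (n + 1) × Fin (k + 1))
    (hmono : Monotone ψ) (h0 : ψ 0 = (0, 0)) (hlast : ψ (Fin.last N) = (Fin.last n, Fin.last k))
    (hstep : ∀ i : Fin N, gridRank (ψ i.succ) ≤ gridRank (ψ i.castSucc) + 1) :
    ∃ (s : Fin (N + 1) → Fin (n + k + 1)) (γ' : Fin (n + k + 1) → Fin (n + 1) × Fin (k + 1)),
      Monotone s ∧ Function.Surjective s ∧ IsPath n k (n + k) γ' ∧ ∀ t, ψ t = γ' (s t) := by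
  set s : Fin (N + 1) → Fin (n + k + 1) := fun t => ⟨gridRank (ψ t), gridRank_lt _⟩
  have hs_mono : Monotone s := fun t t' htt' => by
    have h := hmono htt'
    rw [Prod.le_def, Fin.le_def, Fin.le_def] at h
    simp only [s, Fin.mk_le_mk, gridRank]
    omega
  have hs_surj : Function.Surjective s := fun c => by
    obtain ⟨u, hu⟩ := exists_apply_eq_of_le_add_one (f := fun t => gridRank (ψ t)) hstep
      (t := Fin.last N) (by simp [h0, gridRank])
      (by simpa only [hlast, gridRank, Fin.val_last] using Nat.le_of_lt_succ c.2)
    exact ⟨u, Fin.ext hu⟩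
  set γ' := ψ ∘ Function.surjInv hs_surj
  have hs_γ' : ∀ c, s (Function.surjInv hs_surj c) = c := Function.surjInv_eq hs_surj
  have hfactor : ∀ t, ψ t = γ' (s t) := fun t => by
    have hst := hs_γ' (s t)
    rcases le_total t (Function.surjInv hs_surj (s t)) with h | h
    · exact eq_of_le_of_gridRank_eq (hmono h) (congrArg Fin.val hst).symm
    · exact (eq_of_le_of_gridRank_eq (hmono h) (congrArg Fin.val hst)).symm
  refine ⟨s, γ', hs_mono, hs_surj, isPath_of_monotone_of_gridRank_eq ?_ ?_, hfactor⟩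
  · intro c c' hcc'
    rcases hcc'.lt_or_eq with h | rfl
    · rw [← hs_γ' c, ← hs_γ' c'] at h
      exact hmono (hs_mono.reflect_lt h).le
    · exact le_rfl
  · exact fun c => congrArg Fin.val (hs_γ' c)

/-- Let `γ` be a path in `[n] × [k]` and `φ` a path in `[n+k] × [k]`.  Then there are a
surjective monotone map `s : [n+2k] → [n+k]` and a path `γ' ≤ γ` in `[n] × [k]` such that
`E_γ ∘ φ = γ' ∘ s` and `E_γ (E_φ (i, j)) = E_{γ'} (s i, j)` for all `(i, j)`. -/
theorem pathExt_comp_pathExt_factors (n k : ℕ)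
    (γ : Fin (n + k + 1) → Fin (n + 1) × Fin (k + 1)) (hγ : IsPath n k (n + k) γ)
    (φ : Fin (n + k + k + 1) → Fin (n + k + 1) × Fin (k + 1))
    (hφ : IsPath (n + k) k (n + k + k) φ) :
    ∃ (s : Fin (n + k + k + 1) → Fin (n + k + 1))
      (γ' : Fin (n + k + 1) → Fin (n + 1) × Fin (k + 1)),
      Monotone s ∧ Function.Surjective s ∧ IsPath n k (n + k) γ' ∧
      (γ' = γ ∨ pathLT n k (n + k) γ' γ) ∧
      (∀ i : Fin (n + k + k + 1), pathExt n k (n + k) γ (φ i) = γ' (s i)) ∧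
      (∀ (i : Fin (n + k + k + 1)) (j : Fin (k + 1)),
        pathExt n k (n + k) γ (pathExt (n + k) k (n + k + k) φ (i, j)) =
          pathExt n k (n + k) γ' (s i, j)) := by
  have hstep (i : Fin (n + k + k)) : gridRank (pathExt n k (n + k) γ (φ i.succ)) ≤
      gridRank (pathExt n k (n + k) γ (φ i.castSucc)) + 1 := by
    have h := gridRank_pathExt_add_le hγ (hφ.monotone (Fin.castSucc_le_succ i))
    rw [hφ.gridRank_eq, hφ.gridRank_eq, Fin.val_castSucc, Fin.val_succ] at h
    omega
  obtain ⟨s, γ', hs_mono, hs_surj, hγ', hψ⟩ :=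
    exists_surjective_comp_path (fun t => pathExt n k (n + k) γ (φ t))
      ((pathExt_monotone hγ).comp hφ.monotone)
      (by simp [pathExt, hφ.1, hγ.1]) (by simp [pathExt, hφ.2.1, hγ.2.1]) hstep
  have hle (c : Fin (n + k + 1)) : (γ' c).1 ≤ (γ c).1 := by
    obtain ⟨t, rfl⟩ := hs_surj c
    rw [← hψ t]
    exact fst_pathExt_le hγ (φ t) (by rw [hψ t, hγ'.gridRank_eq])
  refine ⟨s, γ', hs_mono, hs_surj, hγ', eq_or_pathLT_of_fst_le hγ' hγ hle, hψ, fun i j => ?_⟩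
  rw [pathExt_pathExt, hψ i]
  rfl
end

section
/- For marked-scaled simplicial sets X, Y, Z, the canonical associativity isomorphism (X × Y) × Z ≅ X × (Y × Z) of underlying simplicial sets identifies the marked edges of (X ⊗ Y) ⊗ Z with the marked edges of X ⊗ (Y ⊗ Z), and identifies the thin triangles of (X ⊗ Y) ⊗ Z with the thin triangles of X ⊗ (Y ⊗ Z); hence the Gray tensor product of marked-scaled simplicial sets is associative. -/
open CategoryTheory Simplicial

/-- The objectwise product of two simplicial sets. -/
def sProd (X Y : SSet) : SSet where
  obj n := X.obj n × Y.obj n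
  map f := TypeCat.ofHom fun p => (X.map f p.1, Y.map f p.2)
  map_id n := by
    ext p <;> simp
  map_comp f g := by
    ext p <;> simp

/-- The data of a marked-scaled simplicial set: a simplicial set together with a set of
marked edges and a set of thin triangles. -/
structure PreMSSet where
  carrier : SSet
  marked : Set (carrier _⦋1⦌)
  thin : Set (carrier _⦋2⦌)

/-- The data of a `PreMSSet` is a marked-scaled simplicial set when the marked edges contain
all degenerate edges and the thin triangles contain all degenerate triangles. -/
def IsMSSet (X : PreMSSet) : Prop :=
  (∀ v : X.carrier _⦋0⦌, X.carrier.map (SimplexCategory.σ (0 : Fin 1)).op v ∈ X.marked) ∧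
  (∀ e : X.carrier _⦋1⦌, X.carrier.map (SimplexCategory.σ (0 : Fin 2)).op e ∈ X.thin) ∧
  (∀ e : X.carrier _⦋1⦌, X.carrier.map (SimplexCategory.σ (1 : Fin 2)).op e ∈ X.thin)

/-- The Gray tensor product of marked-scaled simplicial sets: the underlying simplicial set
is the product; an edge is marked iff both components are marked; a triangle `(σ, σ')` is
thin iff both components are thin and, in addition, the restriction of `σ'` to `Δ^{0,1}`
(the `d₂`-face) is marked in `Y` or the restriction of `σ` to `Δ^{1,2}` (the `d₀`-face) is
marked in `X`. -/
def gray (X Y : PreMSSet) : PreMSSet where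
  carrier := sProd X.carrier Y.carrier
  marked := {e : X.carrier _⦋1⦌ × Y.carrier _⦋1⦌ | e.1 ∈ X.marked ∧ e.2 ∈ Y.marked}
  thin := {σ : X.carrier _⦋2⦌ × Y.carrier _⦋2⦌ |
    σ.1 ∈ X.thin ∧ σ.2 ∈ Y.thin ∧
      (Y.carrier.map (SimplexCategory.δ (2 : Fin 3)).op σ.2 ∈ Y.marked ∨
        X.carrier.map (SimplexCategory.δ (0 : Fin 3)).op σ.1 ∈ X.marked)}

/-- The thin condition of the iterated Gray product, once faces of product simplices are
computed componentwise: `tᵢ` is thinness of `σᵢ` and `a, b, c, d` the markedness of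
`d₂σ₂, d₀σ₁, d₂σ₃, d₀σ₂`. Both sides amount to `tᵢ` for all `i` and
`(a ∧ c) ∨ (b ∧ c) ∨ (b ∧ d)`. -/
theorem gray_thin_condition_assoc (t₁ t₂ t₃ a b c d : Prop) :
    (t₁ ∧ t₂ ∧ (a ∨ b)) ∧ t₃ ∧ (c ∨ b ∧ d) ↔ t₁ ∧ (t₂ ∧ t₃ ∧ (c ∨ d)) ∧ (a ∧ c ∨ b) := by
  tauto

theorem gray_assoc_general (X Y Z : PreMSSet) :
    (∀ (e₁ : X.carrier _⦋1⦌) (e₂ : Y.carrier _⦋1⦌) (e₃ : Z.carrier _⦋1⦌),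
      (((e₁, e₂), e₃) ∈ (gray (gray X Y) Z).marked ↔
        (e₁, (e₂, e₃)) ∈ (gray X (gray Y Z)).marked)) ∧
    (∀ (σ₁ : X.carrier _⦋2⦌) (σ₂ : Y.carrier _⦋2⦌) (σ₃ : Z.carrier _⦋2⦌),
      (((σ₁, σ₂), σ₃) ∈ (gray (gray X Y) Z).thin ↔
        (σ₁, (σ₂, σ₃)) ∈ (gray X (gray Y Z)).thin)) :=
  ⟨fun _ _ _ => and_assoc, fun _ _ _ => gray_thin_condition_assoc _ _ _ _ _ _ _⟩

/-- For marked-scaled simplicial sets `X, Y, Z`, the canonical associativity isomorphism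
`(X × Y) × Z ≅ X × (Y × Z)` of underlying simplicial sets identifies the marked edges of
`(X ⊗ Y) ⊗ Z` with those of `X ⊗ (Y ⊗ Z)`, and the thin triangles of `(X ⊗ Y) ⊗ Z` with
those of `X ⊗ (Y ⊗ Z)`: the Gray tensor product is associative. -/
theorem gray_assoc (X Y Z : PreMSSet) (hX : IsMSSet X) (hY : IsMSSet Y) (hZ : IsMSSet Z) :
    (∀ (e₁ : X.carrier _⦋1⦌) (e₂ : Y.carrier _⦋1⦌) (e₃ : Z.carrier _⦋1⦌),
      (((e₁, e₂), e₃) ∈ (gray (gray X Y) Z).marked ↔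
        (e₁, (e₂, e₃)) ∈ (gray X (gray Y Z)).marked)) ∧
    (∀ (σ₁ : X.carrier _⦋2⦌) (σ₂ : Y.carrier _⦋2⦌) (σ₃ : Z.carrier _⦋2⦌),
      (((σ₁, σ₂), σ₃) ∈ (gray (gray X Y) Z).thin ↔
        (σ₁, (σ₂, σ₃)) ∈ (gray X (gray Y Z)).thin)) :=
  gray_assoc_general X Y Z
end
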